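/- arXiv:2107.14588 — 5 statements merged into one kernel-verified Lean document; each statement's English description precedes it below -/
import Mathlib

section
/- For every vector of link lengths a = (a_1,…,a_n) with all a_i > 0, every k with 1 ≤ k ≤ n, and all angle vectors α ∈ [0,2π)^k, β ∈ [0,π]^k, the norm of the endpoint satisfies max( 0 , R_k^min ) ≤ ‖f_{a,k}(α,β)‖ ≤ R_k^max, where R_k^min := max_{1≤i≤k} ( 2a_i − Σ_{j=1}^k a_j ) and R_k^max := Σ_{j=1}^k a_j. -/
open Real

/-- The `k`-th endpoint map of a spherical-joint kinematic chain with link lengths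
`a 1, …, a n` and joint angles `α j ∈ [0,2π)`, `β j ∈ [0,π]`. -/
noncomputable def chainEndpoint (a α β : ℕ → ℝ) (k : ℕ) : EuclideanSpace ℝ (Fin 3) :=
  ∑ j ∈ Finset.Icc 1 k, a j •
    (WithLp.equiv 2 (Fin 3 → ℝ)).symm
      ![Real.sin (β j) * Real.cos (α j), Real.sin (β j) * Real.sin (α j), Real.cos (β j)]

/-- `R_k^min = max_{1 ≤ i ≤ k} (2 a_i − Σ_{j=1}^k a_j)`. -/
noncomputable def Rmin (a : ℕ → ℝ) (k : ℕ) : ℝ :=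
  sSup ((fun i => 2 * a i - ∑ j ∈ Finset.Icc 1 k, a j) '' Set.Icc 1 k)

/-- `R_k^max = Σ_{j=1}^k a_j`. -/
noncomputable def Rmax (a : ℕ → ℝ) (k : ℕ) : ℝ :=
  ∑ j ∈ Finset.Icc 1 k, a j

/-! Each link contributes a vector of length `a j`. The upper bound is the triangle inequality;
for the lower bound, the triangle inequality bounds `a i` by the length of the endpoint plus the
total length `Rmax a k - a i` of the remaining links. -/

noncomputable def sphericalUnit (φ θ : ℝ) : EuclideanSpace ℝ (Fin 3) :=
  (WithLp.equiv 2 (Fin 3 → ℝ)).symm ![sin θ * cos φ, sin θ * sin φ, cos θ]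

theorem norm_sphericalUnit (φ θ : ℝ) : ‖sphericalUnit φ θ‖ = 1 := by
  have hsq : ‖sphericalUnit φ θ‖ ^ 2 = 1 := by
    rw [EuclideanSpace.norm_sq_eq]
    simp only [sphericalUnit, Real.norm_eq_abs, sq_abs, Fin.sum_univ_three]
    simp only [WithLp.equiv_symm_apply, PiLp.toLp_apply, Matrix.cons_val_zero,
      Matrix.cons_val_one, Matrix.cons_val_two, Matrix.head_cons, Matrix.tail_cons]
    linear_combination sin θ ^ 2 * sin_sq_add_cos_sq φ + sin_sq_add_cos_sq θ
  simpa using (pow_eq_one_iff_of_nonneg (norm_nonneg _) two_ne_zero).mp hsq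

theorem chainEndpoint_eq_sum_sphericalUnit (a α β : ℕ → ℝ) (k : ℕ) :
    chainEndpoint a α β k = ∑ j ∈ Finset.Icc 1 k, a j • sphericalUnit (α j) (β j) :=
  rfl

theorem two_mul_norm_sub_sum_norm_le_norm_sum {ι E : Type*} [DecidableEq ι]
    [SeminormedAddCommGroup E] {s : Finset ι} {i : ι} (hi : i ∈ s) (v : ι → E) :
    2 * ‖v i‖ - ∑ j ∈ s, ‖v j‖ ≤ ‖∑ j ∈ s, v j‖ := by
  have hsplit : ∑ j ∈ s, v j = v i + ∑ j ∈ s.erase i, v j := (Finset.add_sum_erase s v hi).symm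
  have hrest : ‖∑ j ∈ s.erase i, v j‖ ≤ ∑ j ∈ s, ‖v j‖ - ‖v i‖ := by
    rw [← Finset.sum_erase_eq_sub hi]
    exact norm_sum_le _ _
  have htri : ‖v i‖ ≤ ‖∑ j ∈ s, v j‖ + ‖∑ j ∈ s.erase i, v j‖ := by
    simpa [hsplit] using norm_sub_le (∑ j ∈ s, v j) (∑ j ∈ s.erase i, v j)
  linarith

theorem chainEndpoint_norm_bounds_general
    (n : ℕ) (a : ℕ → ℝ) (ha : ∀ i, 1 ≤ i → i ≤ n → 0 < a i)
    (k : ℕ) (hk2 : k ≤ n) (α β : ℕ → ℝ) :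
    max 0 (Rmin a k) ≤ ‖chainEndpoint a α β k‖ ∧
      ‖chainEndpoint a α β k‖ ≤ Rmax a k := by
  set v : ℕ → EuclideanSpace ℝ (Fin 3) := fun j => a j • sphericalUnit (α j) (β j)
  have hv : ∀ j ∈ Finset.Icc 1 k, ‖v j‖ = a j := fun j hj => by
    obtain ⟨hj1, hjk⟩ := Finset.mem_Icc.mp hj
    simp [v, norm_smul, norm_sphericalUnit, abs_of_pos (ha j hj1 (hjk.trans hk2))]
  have hRmax : Rmax a k = ∑ j ∈ Finset.Icc 1 k, ‖v j‖ := (Finset.sum_congr rfl hv).symm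
  rw [chainEndpoint_eq_sum_sphericalUnit]
  refine ⟨max_le (norm_nonneg _) (Real.sSup_le ?_ (norm_nonneg _)), hRmax ▸ norm_sum_le _ _⟩
  rintro _ ⟨i, hi, rfl⟩
  have hiF : i ∈ Finset.Icc 1 k := Finset.mem_Icc.mpr hi
  have key := two_mul_norm_sub_sum_norm_le_norm_sum hiF v
  rw [hv i hiF, ← hRmax] at key
  exact key

/-- The norm of the endpoint of a kinematic chain with `k` links satisfies
`max(0, R_k^min) ≤ ‖f_{a,k}(α,β)‖ ≤ R_k^max`. -/
theorem chainEndpoint_norm_bounds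
    (n : ℕ) (a : ℕ → ℝ) (ha : ∀ i, 1 ≤ i → i ≤ n → 0 < a i)
    (k : ℕ) (hk1 : 1 ≤ k) (hk2 : k ≤ n) (α β : ℕ → ℝ)
    (hα : ∀ j, 1 ≤ j → j ≤ k → α j ∈ Set.Ico (0 : ℝ) (2 * π))
    (hβ : ∀ j, 1 ≤ j → j ≤ k → β j ∈ Set.Icc (0 : ℝ) π) :
    max 0 (Rmin a k) ≤ ‖chainEndpoint a α β k‖ ∧
      ‖chainEndpoint a α β k‖ ≤ Rmax a k :=
  chainEndpoint_norm_bounds_general n a ha k hk2 α β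
end

section
/- For every vector of link lengths a = (a_1,…,a_n) with all a_i > 0, every k with 1 ≤ k ≤ n, and every real number r with max( 0 , R_k^min ) ≤ r ≤ R_k^max, there exist angle vectors α ∈ [0,2π)^k and β ∈ [0,π]^k such that ‖f_{a,k}(α,β)‖ = r, where R_k^min := max_{1≤i≤k} ( 2a_i − Σ_{j=1}^k a_j ) and R_k^max := Σ_{j=1}^k a_j. In other words, the reachable distances from the origin of a spherical-joint kinematic chain with k links form exactly the interval [max(0,R_k^min), R_k^max]. -/
open Real

/-!
A planar chain `∑ a_j e^{iφ_j}` laid in the `xz`-plane is a spatial chain with `α_j ∈ {0, π}` and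
`β_j = arccos (cos φ_j)`, so it suffices to reach distance `r` in the plane. There one inducts on
the links: if `S` is the total length of all links but the last one `c`, the first links are
brought to distance `ρ = min S (r + c)`; as the last link turns through the angle `π`, the
distance of the endpoint runs from `ρ + c` down to `|ρ - c|`, and these two bracket `r`.
-/

theorem exists_norm_add_mul_exp_eq (w : ℂ) {c r : ℝ} (hc : 0 ≤ c) (hlo : |‖w‖ - c| ≤ r)
    (hhi : r ≤ ‖w‖ + c) : ∃ θ : ℝ, ‖w + c * Complex.exp (θ * Complex.I)‖ = r := by
  set u := Complex.exp (w.arg * Complex.I)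
  have hw : w = ‖w‖ * u := (Complex.norm_mul_exp_arg_mul_I w).symm
  have hu : ‖u‖ = 1 := Complex.norm_exp_ofReal_mul_I _
  have h_far : ‖w + c * u‖ = ‖w‖ + c := by
    rw [show w + c * u = ((‖w‖ + c : ℝ) : ℂ) * u by push_cast; linear_combination hw,
      norm_mul, hu, mul_one, Complex.norm_real, norm_of_nonneg (by positivity)]
  have h_near : ‖w + c * Complex.exp ((w.arg + π : ℝ) * Complex.I)‖ = |‖w‖ - c| := by
    rw [show w + c * Complex.exp ((w.arg + π : ℝ) * Complex.I) = ((‖w‖ - c : ℝ) : ℂ) * u by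
        push_cast
        rw [add_mul, Complex.exp_add, Complex.exp_pi_mul_I]
        linear_combination hw,
      norm_mul, hu, mul_one, Complex.norm_real, Real.norm_eq_abs]
  have hcont : Continuous fun θ : ℝ => ‖w + c * Complex.exp (θ * Complex.I)‖ := by fun_prop
  exact intermediate_value_univ (w.arg + π) w.arg hcont
    (by rw [h_near, h_far]; exact ⟨hlo, hhi⟩ : r ∈ _)

theorem exists_norm_sum_mul_exp_eq {ι : Type*} (s : Finset ι) (a : ι → ℝ)
    (ha : ∀ i ∈ s, 0 ≤ a i) {r : ℝ} (hr : 0 ≤ r) (hrS : r ≤ ∑ i ∈ s, a i)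
    (hlong : ∀ i ∈ s, 2 * a i ≤ ∑ j ∈ s, a j + r) :
    ∃ φ : ι → ℝ, ‖∑ i ∈ s, a i * Complex.exp (φ i * Complex.I)‖ = r := by
  classical
  induction s using Finset.induction_on generalizing r with
  | empty => exact ⟨0, by simp_all [le_antisymm hrS hr]⟩
  | insert c s hc ih =>
    rw [Finset.sum_insert hc] at hrS hlong
    simp only [Finset.mem_insert, forall_eq_or_imp] at ha hlong
    set S := ∑ i ∈ s, a i
    have hS : 0 ≤ S := Finset.sum_nonneg ha.2
    obtain ⟨φ, hφ⟩ := ih ha.2 (r := min S (r + a c)) (le_min hS (by linarith [ha.1]))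
      (min_le_left _ _) fun i hi ↦ by
        rw [← min_add_add_left]
        exact le_min (by linarith [Finset.single_le_sum ha.2 hi]) (by linarith [hlong.2 i hi])
    obtain ⟨θ, hθ⟩ := exists_norm_add_mul_exp_eq (∑ i ∈ s, a i * Complex.exp (φ i * Complex.I))
      ha.1 (r := r) (by rw [hφ, abs_le]; constructor <;> grind) (by grind)
    refine ⟨Function.update φ c θ, ?_⟩
    rw [Finset.sum_insert hc, Function.update_self, add_comm, ← hθ]
    congr 2
    exact Finset.sum_congr rfl fun i hi ↦ by rw [Function.update_of_ne (ne_of_mem_of_not_mem hi hc)]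

theorem exists_sphericalAngles_of_xz (φ : ℝ) : ∃ α ∈ Set.Ico 0 (2 * π), ∃ β ∈ Set.Icc 0 π,
    sin β * cos α = sin φ ∧ sin β * sin α = 0 ∧ cos β = cos φ := by
  have hsin : sin (arccos (cos φ)) = |sin φ| := by
    rw [sin_arccos, ← sin_sq, sqrt_sq_eq_abs]
  have hcos : cos (arccos (cos φ)) = cos φ := cos_arccos (neg_one_le_cos φ) (cos_le_one φ)
  by_cases h : 0 ≤ sin φ
  · refine ⟨0, ⟨le_rfl, by positivity⟩, arccos (cos φ), ⟨arccos_nonneg _, arccos_le_pi _⟩, ?_⟩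
    simp [hsin, hcos, abs_of_nonneg h]
  · refine ⟨π, ⟨pi_nonneg, by linarith [pi_pos]⟩, arccos (cos φ),
      ⟨arccos_nonneg _, arccos_le_pi _⟩, ?_⟩
    simp [hsin, hcos, abs_of_neg (not_le.mp h)]

theorem norm_chainEndpoint_eq_norm_sum_mul_exp (a α β φ : ℕ → ℝ) (k : ℕ)
    (h : ∀ j, sin (β j) * cos (α j) = sin (φ j) ∧ sin (β j) * sin (α j) = 0 ∧
      cos (β j) = cos (φ j)) :
    ‖chainEndpoint a α β k‖ = ‖∑ j ∈ Finset.Icc 1 k, a j * Complex.exp (φ j * Complex.I)‖ := by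
  set z := ∑ j ∈ Finset.Icc 1 k, (a j : ℂ) * Complex.exp (φ j * Complex.I)
  have hre : z.re = ∑ j ∈ Finset.Icc 1 k, a j * cos (φ j) := by
    simp [z, Complex.re_sum, Complex.exp_ofReal_mul_I_re]
  have him : z.im = ∑ j ∈ Finset.Icc 1 k, a j * sin (φ j) := by
    simp [z, Complex.im_sum, Complex.exp_ofReal_mul_I_im]
  have : chainEndpoint a α β k = (WithLp.equiv 2 (Fin 3 → ℝ)).symm ![z.im, 0, z.re] := by
    ext i
    fin_cases i <;> simp [chainEndpoint, hre, him, h]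
  rw [this, EuclideanSpace.norm_eq, Complex.norm_def, Complex.normSq_apply]
  simp [Fin.sum_univ_three, sq, add_comm]

theorem two_mul_le_Rmax_add_of_Rmin_le {a : ℕ → ℝ} {k : ℕ} {r : ℝ} (hr : Rmin a k ≤ r) :
    ∀ i ∈ Finset.Icc 1 k, 2 * a i ≤ Rmax a k + r := by
  intro i hi
  have : 2 * a i - Rmax a k ≤ Rmin a k :=
    le_csSup ((Set.finite_Icc 1 k).image _).bddAbove ⟨i, by simpa using hi, rfl⟩
  linarith

theorem chainEndpoint_norm_surjective_general
    (n : ℕ) (a : ℕ → ℝ) (ha : ∀ i, 1 ≤ i → i ≤ n → 0 < a i)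
    (k : ℕ) (hk2 : k ≤ n) (r : ℝ)
    (hr1 : max 0 (Rmin a k) ≤ r) (hr2 : r ≤ Rmax a k) :
    ∃ α β : ℕ → ℝ,
      (∀ j, 1 ≤ j → j ≤ k → α j ∈ Set.Ico (0 : ℝ) (2 * π)) ∧
      (∀ j, 1 ≤ j → j ≤ k → β j ∈ Set.Icc (0 : ℝ) π) ∧
      ‖chainEndpoint a α β k‖ = r := by
  obtain ⟨hr0, hrRmin⟩ := max_le_iff.mp hr1
  have ha' : ∀ i ∈ Finset.Icc 1 k, 0 ≤ a i := fun i hi ↦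
    (ha i (Finset.mem_Icc.mp hi).1 ((Finset.mem_Icc.mp hi).2.trans hk2)).le
  obtain ⟨φ, hφ⟩ := exists_norm_sum_mul_exp_eq (Finset.Icc 1 k) a ha' hr0 hr2
    (two_mul_le_Rmax_add_of_Rmin_le hrRmin)
  choose α hα β hβ hαβ using fun j ↦ exists_sphericalAngles_of_xz (φ j)
  exact ⟨α, β, fun j _ _ ↦ hα j, fun j _ _ ↦ hβ j,
    (norm_chainEndpoint_eq_norm_sum_mul_exp a α β φ k hαβ).trans hφ⟩

/-- Every `r` with `max(0, R_k^min) ≤ r ≤ R_k^max` is a reachable distance from the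
origin of a spherical-joint kinematic chain with `k` links: there are angle vectors
`α ∈ [0,2π)^k`, `β ∈ [0,π]^k` with `‖f_{a,k}(α,β)‖ = r`. -/
theorem chainEndpoint_norm_surjective
    (n : ℕ) (a : ℕ → ℝ) (ha : ∀ i, 1 ≤ i → i ≤ n → 0 < a i)
    (k : ℕ) (hk1 : 1 ≤ k) (hk2 : k ≤ n) (r : ℝ)
    (hr1 : max 0 (Rmin a k) ≤ r) (hr2 : r ≤ Rmax a k) :
    ∃ α β : ℕ → ℝ,
      (∀ j, 1 ≤ j → j ≤ k → α j ∈ Set.Ico (0 : ℝ) (2 * π)) ∧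
      (∀ j, 1 ≤ j → j ≤ k → β j ∈ Set.Icc (0 : ℝ) π) ∧
      ‖chainEndpoint a α β k‖ = r :=
  chainEndpoint_norm_surjective_general n a ha k hk2 r hr1 hr2
end

section
/- (Transformation of variables.) Let a = (a_1,…,a_n) with all a_i > 0 and n ≥ 4, let (L_2,…,L_{n-2}) ∈ ℝ_{≥0}^{n-3}, set L_{n-1} := a_n, and define U_{n-k-1} := L_{n-k-1}² − a_{n-k}² − L_{n-k}² for 1 ≤ k ≤ n−3. If the nested inequalities |L_{n-k} − a_{n-k}| ≤ L_{n-k-1} ≤ L_{n-k} + a_{n-k} hold for all 1 ≤ k ≤ n−3 (i.e. (L_2,…,L_{n-2}) ∈ P(a)), then for all 1 ≤ k ≤ n−3 one has | U_{n-k-1} | ≤ 2 a_{n-k} √( Σ_{j=n-k}^{n-2} U_j + Σ_{j=n-k+1}^{n} a_j² ), and in particular each argument of the square root is nonnegative. -/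
/-!
Since `U_j = L_j² − a_{j+1}² − L_{j+1}²` and `L_{n-1} = a_n`, the square-root argument telescopes:
`Σ_{j=n-k}^{n-2} U_j + Σ_{j=n-k+1}^{n} a_j² = L_{n-k}²`. The claim is then the law of cosines:
`|L_{n-k} − a_{n-k}| ≤ L_{n-k-1} ≤ L_{n-k} + a_{n-k}` says exactly that `L_{n-k-1}²` lies between
`(L_{n-k} ∓ a_{n-k})²`, i.e. that `|L_{n-k-1}² − a_{n-k}² − L_{n-k}²| ≤ 2 a_{n-k} L_{n-k}`.
-/

open Finset

theorem abs_sq_sub_sq_sub_sq_le {x y a : ℝ} (hlow : |y - a| ≤ x) (hupp : x ≤ y + a) :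
    |x ^ 2 - a ^ 2 - y ^ 2| ≤ 2 * a * y := by
  have hx : 0 ≤ x := (abs_nonneg _).trans hlow
  have hsq_low : (y - a) ^ 2 ≤ x ^ 2 := by
    rw [← sq_abs]
    exact pow_le_pow_left₀ (abs_nonneg _) hlow 2
  have hsq_upp : x ^ 2 ≤ (y + a) ^ 2 := pow_le_pow_left₀ hx hupp 2
  rw [abs_le]
  constructor <;> linarith

theorem sum_Ico_add_sum_Ico_sq_eq {U L a : ℕ → ℝ} {m p : ℕ} (hmp : m ≤ p)
    (hU : ∀ j ∈ Ico m p, U j = L j ^ 2 - a (j + 1) ^ 2 - L (j + 1) ^ 2) :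
    ∑ j ∈ Ico m p, U j + ∑ j ∈ Ico (m + 1) (p + 1), a j ^ 2 = L m ^ 2 - L p ^ 2 := by
  rw [← sum_Ico_add' (fun j => a j ^ 2), ← sum_add_distrib,
    sum_congr rfl fun j hj => show U j + a (j + 1) ^ 2 = -(L (j + 1) ^ 2 - L j ^ 2) by
      rw [hU j hj]; ring,
    sum_neg_distrib, sum_Ico_sub (fun j => L j ^ 2) hmp, neg_sub]

theorem transformation_of_variables_general
    (n : ℕ) (a : ℕ → ℝ)
    (L U : ℕ → ℝ)
    (hLtop : L (n - 1) = a n)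
    (hU : ∀ j, 2 ≤ j → j ≤ n - 2 → U j = L j ^ 2 - a (j + 1) ^ 2 - L (j + 1) ^ 2)
    (hP : ∀ k, 1 ≤ k → k ≤ n - 3 →
      |L (n - k) - a (n - k)| ≤ L (n - k - 1) ∧
      L (n - k - 1) ≤ L (n - k) + a (n - k)) :
    ∀ k, 1 ≤ k → k ≤ n - 3 →
      0 ≤ (∑ j ∈ Finset.Icc (n - k) (n - 2), U j) + ∑ j ∈ Finset.Icc (n - k + 1) n, a j ^ 2 ∧
      |U (n - k - 1)| ≤ 2 * a (n - k) *
        Real.sqrt ((∑ j ∈ Finset.Icc (n - k) (n - 2), U j) +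
          ∑ j ∈ Finset.Icc (n - k + 1) n, a j ^ 2) := by
  intro k hk₁ hk₂
  obtain ⟨hlow, hupp⟩ := hP k hk₁ hk₂
  have hL : 0 ≤ L (n - k) := by linarith [abs_sub_le_iff.mp hlow]
  have hsum : (∑ j ∈ Icc (n - k) (n - 2), U j) + ∑ j ∈ Icc (n - k + 1) n, a j ^ 2
      = L (n - k) ^ 2 := by
    have hIcc : Icc (n - k) (n - 2) = Ico (n - k) (n - 1) := by ext; simp; omega
    rw [hIcc, ← Ico_add_one_right_eq_Icc, show n + 1 = n - 1 + 1 + 1 by omega,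
      sum_Ico_succ_top (by omega), ← add_assoc, sum_Ico_add_sum_Ico_sq_eq (L := L) (by omega),
      show n - 1 + 1 = n by omega, hLtop]
    · ring
    · intro j hj
      rw [mem_Ico] at hj
      exact hU j (by omega) (by omega)
  have hUk := hU (n - k - 1) (by omega) (by omega)
  rw [show n - k - 1 + 1 = n - k by omega] at hUk
  rw [hsum, Real.sqrt_sq hL, hUk]
  exact ⟨sq_nonneg _, abs_sq_sub_sq_sub_sq_le hlow hupp⟩

/-- Transformation of variables: if `(L_2, …, L_{n-2}) ∈ ℝ_{≥0}^{n-3}` satisfies, with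
`L_{n-1} := a_n`, the nested inequalities `|L_{n-k} − a_{n-k}| ≤ L_{n-k-1} ≤ L_{n-k} + a_{n-k}`
for `1 ≤ k ≤ n−3` (i.e. lies in the polytope `P(a)`), then the transformed variables
`U_{n-k-1} := L_{n-k-1}² − a_{n-k}² − L_{n-k}²` satisfy, for all `1 ≤ k ≤ n−3`,
`|U_{n-k-1}| ≤ 2 a_{n-k} √(Σ_{j=n-k}^{n-2} U_j + Σ_{j=n-k+1}^{n} a_j²)`, each square-root
argument being nonnegative. -/
theorem transformation_of_variables
    (n : ℕ) (hn : 4 ≤ n) (a : ℕ → ℝ) (ha : ∀ i, 1 ≤ i → i ≤ n → 0 < a i)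
    (L U : ℕ → ℝ)
    (hL0 : ∀ k, 2 ≤ k → k ≤ n - 2 → 0 ≤ L k)
    (hLtop : L (n - 1) = a n)
    (hU : ∀ j, 2 ≤ j → j ≤ n - 2 → U j = L j ^ 2 - a (j + 1) ^ 2 - L (j + 1) ^ 2)
    (hP : ∀ k, 1 ≤ k → k ≤ n - 3 →
      |L (n - k) - a (n - k)| ≤ L (n - k - 1) ∧
      L (n - k - 1) ≤ L (n - k) + a (n - k)) :
    ∀ k, 1 ≤ k → k ≤ n - 3 →
      0 ≤ (∑ j ∈ Finset.Icc (n - k) (n - 2), U j) + ∑ j ∈ Finset.Icc (n - k + 1) n, a j ^ 2 ∧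
      |U (n - k - 1)| ≤ 2 * a (n - k) *
        Real.sqrt ((∑ j ∈ Finset.Icc (n - k) (n - 2), U j) +
          ∑ j ∈ Finset.Icc (n - k + 1) n, a j ^ 2) :=
  transformation_of_variables_general n a L U hLtop hU hP
end

section
/- (The parametrization map Γ lands in the transformed polytope.) Let a = (a_1,…,a_n) with all a_i > 0 and n ≥ 4. Define recursively, for s = (s_2,…,s_{n-2}) ∈ [−1,1]^{n-3}: Γ_{n-2}(s) := 2 s_{n-2} a_{n-1} a_n, and for 2 ≤ k ≤ n−3, Γ_{n-k-1}(s) := s_{n-k-1} · 2 a_{n-k} √( Σ_{j=n-k}^{n-2} Γ_j(s) + Σ_{j=n-k+1}^{n} a_j² ). Then for every s ∈ [−1,1]^{n-3}: (i) every square-root argument Σ_{j=n-k}^{n-2} Γ_j(s) + Σ_{j=n-k+1}^{n} a_j² is nonnegative, and (ii) Γ(s) := (Γ_2(s),…,Γ_{n-2}(s)) ∈ PU(a), i.e. | Γ_{n-k-1}(s) | ≤ 2 a_{n-k} √( Σ_{j=n-k}^{n-2} Γ_j(s) + Σ_{j=n-k+1}^{n} a_j² ) for all 1 ≤ k ≤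 n−3. -/
/-!
Write `R k` for the radicand of the `k`-th constraint. Adding one more index gives
`R (k + 1) = R k + Γ_{n-k-1} + a_{n-k}²`, and the `k`-th constraint
`|Γ_{n-k-1}| ≤ 2 a_{n-k} √(R k)` bounds this from below by `(√(R k) - a_{n-k})² ≥ 0`.
So, by induction on `k`, each radicand is nonnegative, and the `(k + 1)`-st constraint
holds because `Γ_{n-k-2}` is `s_{n-k-2} ∈ [-1, 1]` times its right-hand side.
-/

open Finset

theorem abs_mul_le_of_mem_Icc {s x : ℝ} (hs : s ∈ Set.Icc (-1 : ℝ) 1) (hx : 0 ≤ x) :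
    |s * x| ≤ x := by
  rw [abs_mul, abs_of_nonneg hx]
  exact mul_le_of_le_one_left hx (abs_le.mpr hs)

theorem add_add_sq_nonneg_of_abs_le {R g c : ℝ} (hR : 0 ≤ R) (hg : |g| ≤ 2 * c * √R) :
    0 ≤ R + g + c ^ 2 := by
  have hsq : √R ^ 2 = R := Real.sq_sqrt hR
  nlinarith [neg_abs_le g, sq_nonneg (√R - c)]

noncomputable def radicand (n : ℕ) (a G : ℕ → ℝ) (k : ℕ) : ℝ :=
  (∑ j ∈ Icc (n - k) (n - 2), G j) + ∑ j ∈ Icc (n - k + 1) n, a j ^ 2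

theorem radicand_one {n : ℕ} (hn : 2 ≤ n) (a G : ℕ → ℝ) : radicand n a G 1 = a n ^ 2 := by
  rw [radicand, Icc_eq_empty (by omega), sum_empty, zero_add, Nat.sub_add_cancel (by omega),
    Icc_self, sum_singleton]

theorem radicand_succ {n k : ℕ} (hk : 1 ≤ k) (hkn : k + 1 ≤ n) (a G : ℕ → ℝ) :
    radicand n a G (k + 1) = radicand n a G k + G (n - k - 1) + a (n - k) ^ 2 := by
  have hG : ∑ j ∈ Icc (n - (k + 1)) (n - 2), G j =
      G (n - k - 1) + ∑ j ∈ Icc (n - k) (n - 2), G j := by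
    rw [← add_sum_Ioc_eq_sum_Icc (by omega), ← Icc_add_one_left_eq_Ioc,
      show n - (k + 1) + 1 = n - k by omega, show n - (k + 1) = n - k - 1 by omega]
  have ha : ∑ j ∈ Icc (n - (k + 1) + 1) n, a j ^ 2 =
      a (n - k) ^ 2 + ∑ j ∈ Icc (n - k + 1) n, a j ^ 2 := by
    rw [show n - (k + 1) + 1 = n - k by omega, ← add_sum_Ioc_eq_sum_Icc (by omega),
      ← Icc_add_one_left_eq_Ioc]
  rw [radicand, radicand, hG, ha]
  ring

theorem Gamma_mem_PU_general
    (n : ℕ) (a : ℕ → ℝ) (ha : ∀ i, 1 ≤ i → i ≤ n → 0 < a i)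
    (s : ℕ → ℝ) (hs : ∀ j, 2 ≤ j → j ≤ n - 2 → s j ∈ Set.Icc (-1 : ℝ) 1)
    (G : ℕ → ℝ)
    (hGtop : G (n - 2) = 2 * s (n - 2) * a (n - 1) * a n)
    (hGrec : ∀ k, 2 ≤ k → k ≤ n - 3 →
      G (n - k - 1) = s (n - k - 1) * (2 * a (n - k) *
        Real.sqrt ((∑ j ∈ Finset.Icc (n - k) (n - 2), G j) +
          ∑ j ∈ Finset.Icc (n - k + 1) n, a j ^ 2))) :
    ∀ k, 1 ≤ k → k ≤ n - 3 →
      0 ≤ (∑ j ∈ Finset.Icc (n - k) (n - 2), G j) + ∑ j ∈ Finset.Icc (n - k + 1) n, a j ^ 2 ∧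
      |G (n - k - 1)| ≤ 2 * a (n - k) *
        Real.sqrt ((∑ j ∈ Finset.Icc (n - k) (n - 2), G j) +
          ∑ j ∈ Finset.Icc (n - k + 1) n, a j ^ 2) := by
  intro k hk
  change k ≤ n - 3 →
    0 ≤ radicand n a G k ∧ |G (n - k - 1)| ≤ 2 * a (n - k) * √(radicand n a G k)
  induction k, hk using Nat.le_induction with
  | base =>
    intro hn
    have han : 0 < a n := ha n (by omega) le_rfl
    have han₁ : 0 < a (n - 1) := ha (n - 1) (by omega) (by omega)
    have hG : G (n - 1 - 1) = s (n - 2) * (2 * a (n - 1) * √(a n ^ 2)) := by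
      rw [Real.sqrt_sq han.le, show n - 1 - 1 = n - 2 by omega, hGtop]
      ring
    rw [radicand_one (by omega), hG]
    exact ⟨by positivity, abs_mul_le_of_mem_Icc (hs _ (by omega) le_rfl) (by positivity)⟩
  | succ k hk ih =>
    intro hkn
    obtain ⟨hR, hGk⟩ := ih (by omega)
    have hR' : 0 ≤ radicand n a G (k + 1) := by
      rw [radicand_succ hk (by omega)]
      exact add_add_sq_nonneg_of_abs_le hR hGk
    refine ⟨hR', ?_⟩
    have hak : 0 < a (n - (k + 1)) := ha _ (by omega) (by omega)
    rw [hGrec (k + 1) (by omega) hkn]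
    exact abs_mul_le_of_mem_Icc (hs _ (by omega) (by omega)) (by positivity)

/-- The parametrization map `Γ` lands in the transformed polytope `PU(a)`: let
`G : ℕ → ℝ` satisfy the recursion `G_{n-2} = 2 s_{n-2} a_{n-1} a_n` and, for
`2 ≤ k ≤ n−3`,
`G_{n-k-1} = s_{n-k-1} · 2 a_{n-k} √(Σ_{j=n-k}^{n-2} G_j + Σ_{j=n-k+1}^{n} a_j²)`
for parameters `s ∈ [−1,1]^{n-3}`. Then for all `1 ≤ k ≤ n−3` the square-root argument
`Σ_{j=n-k}^{n-2} G_j + Σ_{j=n-k+1}^{n} a_j²` is nonnegative and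
`|G_{n-k-1}| ≤ 2 a_{n-k} √(Σ_{j=n-k}^{n-2} G_j + Σ_{j=n-k+1}^{n} a_j²)`, i.e.
`Γ(s) = (G_2, …, G_{n-2}) ∈ PU(a)`. -/
theorem Gamma_mem_PU
    (n : ℕ) (hn : 4 ≤ n) (a : ℕ → ℝ) (ha : ∀ i, 1 ≤ i → i ≤ n → 0 < a i)
    (s : ℕ → ℝ) (hs : ∀ j, 2 ≤ j → j ≤ n - 2 → s j ∈ Set.Icc (-1 : ℝ) 1)
    (G : ℕ → ℝ)
    (hGtop : G (n - 2) = 2 * s (n - 2) * a (n - 1) * a n)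
    (hGrec : ∀ k, 2 ≤ k → k ≤ n - 3 →
      G (n - k - 1) = s (n - k - 1) * (2 * a (n - k) *
        Real.sqrt ((∑ j ∈ Finset.Icc (n - k) (n - 2), G j) +
          ∑ j ∈ Finset.Icc (n - k + 1) n, a j ^ 2))) :
    ∀ k, 1 ≤ k → k ≤ n - 3 →
      0 ≤ (∑ j ∈ Finset.Icc (n - k) (n - 2), G j) + ∑ j ∈ Finset.Icc (n - k + 1) n, a j ^ 2 ∧
      |G (n - k - 1)| ≤ 2 * a (n - k) *
        Real.sqrt ((∑ j ∈ Finset.Icc (n - k) (n - 2), G j) +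
          ∑ j ∈ Finset.Icc (n - k + 1) n, a j ^ 2) :=
  Gamma_mem_PU_general n a ha s hs G hGtop hGrec
end

section
/- (Surjectivity of the parametrization Γ.) Let a = (a_1,…,a_n) with all a_i > 0 and n ≥ 4, and let Γ : [−1,1]^{n-3} → ℝ^{n-3} be defined recursively by Γ_{n-2}(s) := 2 s_{n-2} a_{n-1} a_n and Γ_{n-k-1}(s) := s_{n-k-1} · 2 a_{n-k} √( Σ_{j=n-k}^{n-2} Γ_j(s) + Σ_{j=n-k+1}^{n} a_j² ) for 2 ≤ k ≤ n−3. Then for every U ∈ PU(a) there exists s ∈ [−1,1]^{n-3} with Γ(s) = U; hence the image of Γ equals PU(a). -/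
/-!
Take `Γ`'s output to be `U` itself. Then the recursion for `Γ` only asks that
`U_{n-k-1} = s_{n-k-1} · r_k`, where `r_k` is the right-hand side of the `k`-th inequality
of `PU(a)`, so `s_{n-k-1} := U_{n-k-1} / r_k` lies in `[-1, 1]` (when `r_k = 0`, also
`U_{n-k-1} = 0`). For `k = 1` the recursion reads `Γ_{n-2} = 2 s_{n-2} a_{n-1} a_n`, and indeed
`r_1 = 2 a_{n-1} a_n`.
-/

open Finset

section AbsLe

variable {K : Type*} [Field K] [LinearOrder K] [IsStrictOrderedRing K] {u d : K}

theorem div_mem_Icc_of_abs_le (h : |u| ≤ d) : u / d ∈ Set.Icc (-1) 1 := by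
  have hd : 0 ≤ d := (abs_nonneg u).trans h
  rw [Set.mem_Icc, ← abs_le, abs_div, abs_of_nonneg hd]
  exact div_le_one_of_le₀ h hd

theorem div_mul_cancel_of_abs_le (h : |u| ≤ d) : u / d * d = u := by
  rcases ((abs_nonneg u).trans h).eq_or_lt with hd | hd
  · rw [abs_nonpos_iff.mp (h.trans hd.ge), zero_div, zero_mul]
  · exact div_mul_cancel₀ u hd.ne'

end AbsLe

noncomputable def puRadius (n : ℕ) (a U : ℕ → ℝ) (k : ℕ) : ℝ :=
  2 * a (n - k) *
    Real.sqrt ((∑ j ∈ Icc (n - k) (n - 2), U j) + ∑ j ∈ Icc (n - k + 1) n, a j ^ 2)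

theorem puRadius_one {n : ℕ} {a : ℕ → ℝ} (U : ℕ → ℝ) (hn : 2 ≤ n) (han : 0 ≤ a n) :
    puRadius n a U 1 = 2 * a (n - 1) * a n := by
  rw [puRadius, Icc_eq_empty (by omega), sum_empty, show n - 1 + 1 = n by omega, Icc_self,
    sum_singleton, zero_add, Real.sqrt_sq han]

/-- Surjectivity of the parametrization `Γ`: for every `U` in the transformed polytope
`PU(a)` (i.e. `|U_{n-k-1}| ≤ 2 a_{n-k} √(Σ_{j=n-k}^{n-2} U_j + Σ_{j=n-k+1}^{n} a_j²)` for
all `1 ≤ k ≤ n−3`) there exists a parameter vector `s ∈ [−1,1]^{n-3}` such that the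
function `G` defined by the recursion `G_{n-2} = 2 s_{n-2} a_{n-1} a_n` and
`G_{n-k-1} = s_{n-k-1} · 2 a_{n-k} √(Σ_{j=n-k}^{n-2} G_j + Σ_{j=n-k+1}^{n} a_j²)`
(for `2 ≤ k ≤ n−3`) agrees with `U` on the indices `2, …, n−2`; hence the image of `Γ`
equals `PU(a)`. -/
theorem Gamma_surjective_onto_PU
    (n : ℕ) (hn : 4 ≤ n) (a : ℕ → ℝ) (ha : ∀ i, 1 ≤ i → i ≤ n → 0 < a i)
    (U : ℕ → ℝ)
    (hU : ∀ k, 1 ≤ k → k ≤ n - 3 →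
      |U (n - k - 1)| ≤ 2 * a (n - k) *
        Real.sqrt ((∑ j ∈ Finset.Icc (n - k) (n - 2), U j) +
          ∑ j ∈ Finset.Icc (n - k + 1) n, a j ^ 2)) :
    ∃ s : ℕ → ℝ,
      (∀ j, 2 ≤ j → j ≤ n - 2 → s j ∈ Set.Icc (-1 : ℝ) 1) ∧
      ∃ G : ℕ → ℝ,
        G (n - 2) = 2 * s (n - 2) * a (n - 1) * a n ∧
        (∀ k, 2 ≤ k → k ≤ n - 3 →
          G (n - k - 1) = s (n - k - 1) * (2 * a (n - k) *
            Real.sqrt ((∑ j ∈ Finset.Icc (n - k) (n - 2), G j) +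
              ∑ j ∈ Finset.Icc (n - k + 1) n, a j ^ 2))) ∧
        (∀ j, 2 ≤ j → j ≤ n - 2 → G j = U j) := by
  have hbound : ∀ j, 2 ≤ j → j ≤ n - 2 → |U j| ≤ puRadius n a U (n - 1 - j) := fun j hj hjn => by
    have h := hU (n - 1 - j) (by omega) (by omega)
    rwa [show n - (n - 1 - j) - 1 = j by omega] at h
  have hcancel : ∀ k, 1 ≤ k → k ≤ n - 3 →
      U (n - k - 1) / puRadius n a U k * puRadius n a U k = U (n - k - 1) := fun k hk hkn => by
    simpa only [show n - 1 - (n - k - 1) = k by omega]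
      using div_mul_cancel_of_abs_le (hbound (n - k - 1) (by omega) (by omega))
  refine ⟨fun j => U j / puRadius n a U (n - 1 - j),
    fun j hj hjn => div_mem_Icc_of_abs_le (hbound j hj hjn), U, ?_,
    fun k hk hkn => ?_, fun _ _ _ => rfl⟩
  · have hr : puRadius n a U 1 = 2 * a (n - 1) * a n :=
      puRadius_one U (by omega) (ha n (by omega) le_rfl).le
    have htop := hcancel 1 le_rfl (by omega)
    rw [show n - 1 - 1 = n - 2 by omega, hr] at htop
    show _ = 2 * (U (n - 2) / puRadius n a U (n - 1 - (n - 2))) * a (n - 1) * a n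
    rw [show n - 1 - (n - 2) = 1 by omega, hr]
    linear_combination -htop
  · show _ = U (n - k - 1) / puRadius n a U (n - 1 - (n - k - 1)) * puRadius n a U k
    rw [show n - 1 - (n - k - 1) = k by omega]
    exact (hcancel k (by omega) hkn).symm
end
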